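/- arXiv:2310.00625 — 3 statements merged into one kernel-verified Lean document; each statement's English description precedes it below -/
import Mathlib

section
/- Let B be an invertible real 2×2 matrix, let T ⊂ ℝ² be an open set, and let u : ℝ² → ℝ be differentiable with gradient square integrable on T. Define û = u ∘ B⁻¹ on B(T). Then ∫_T ∇u ⋅ ∇φ dx = 0 for every smooth compactly supported φ : T → ℝ if and only if ∫_{B(T)} |det B⁻¹| (B Bᵀ ∇û) ⋅ ∇ψ dŷ = 0 for every smooth compactly supported ψ : B(T) → ℝ. -/
open MeasureTheory Matrix

/-- The action of a `2 × 2` real matrix on `ℝ²` viewed as a Euclidean space. -/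
noncomputable def matVec (A : Matrix (Fin 2) (Fin 2) ℝ) (x : EuclideanSpace ℝ (Fin 2)) :
    EuclideanSpace ℝ (Fin 2) :=
  (EuclideanSpace.equiv (Fin 2) ℝ).symm (A.mulVec (EuclideanSpace.equiv (Fin 2) ℝ x))

noncomputable def clmOf (A : Matrix (Fin 2) (Fin 2) ℝ) :
    EuclideanSpace ℝ (Fin 2) →L[ℝ] EuclideanSpace ℝ (Fin 2) :=
  LinearMap.toContinuousLinearMap (Matrix.toEuclideanLin A)

lemma clmOf_apply (A : Matrix (Fin 2) (Fin 2) ℝ) (x : EuclideanSpace ℝ (Fin 2)) :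
    clmOf A x = matVec A x := rfl

lemma clmOf_det (A : Matrix (Fin 2) (Fin 2) ℝ) : (clmOf A).det = A.det := by
  show LinearMap.det (Matrix.toEuclideanLin A) = A.det
  rw [Matrix.toEuclideanLin_eq_toLin, LinearMap.det_toLin]

lemma matVec_mul (A C : Matrix (Fin 2) (Fin 2) ℝ) (x : EuclideanSpace ℝ (Fin 2)) :
    matVec (A * C) x = matVec A (matVec C x) := by
  ext i; fin_cases i <;> simp [matVec, Matrix.mulVec_mulVec, Matrix.mul_apply, Fin.sum_univ_two] <;> ring

lemma matVec_one (x : EuclideanSpace ℝ (Fin 2)) : matVec 1 x = x := by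
  simp [matVec]

lemma inner_matVec (A : Matrix (Fin 2) (Fin 2) ℝ) (x y : EuclideanSpace ℝ (Fin 2)) :
    (inner ℝ (matVec A x) y : ℝ) = inner ℝ x (matVec Aᵀ y) := by
  have h1 : (inner ℝ (matVec A x) y : ℝ) = dotProduct (A.mulVec x) y := by
    simp [matVec, PiLp.inner_apply, dotProduct, mul_comm]
  have h2 : (inner ℝ x (matVec Aᵀ y) : ℝ) = dotProduct x (Aᵀ.mulVec y) := by
    simp [matVec, PiLp.inner_apply, dotProduct, mul_comm]
  rw [h1, h2, dotProduct_mulVec x Aᵀ y, Matrix.vecMul_transpose,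
    dotProduct_comm]

lemma inner_gradient (f : EuclideanSpace ℝ (Fin 2) → ℝ) (x v : EuclideanSpace ℝ (Fin 2)) :
    (inner ℝ (gradient f x) v : ℝ) = fderiv ℝ f x v :=
  InnerProductSpace.toDual_symm_apply

lemma gradient_comp_matVec (A : Matrix (Fin 2) (Fin 2) ℝ) (f : EuclideanSpace ℝ (Fin 2) → ℝ)
    (hf : Differentiable ℝ f) (x : EuclideanSpace ℝ (Fin 2)) :
    gradient (fun z => f (matVec A z)) x = matVec Aᵀ (gradient f (matVec A x)) := by
  apply ext_inner_right ℝ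
  intro v
  have hcomp : fderiv ℝ (fun z => f (matVec A z)) x
      = (fderiv ℝ f (matVec A x)).comp (clmOf A) :=
    ((hf (matVec A x)).hasFDerivAt.comp x (clmOf A).hasFDerivAt).fderiv
  rw [inner_gradient, hcomp]
  have : (inner ℝ (matVec Aᵀ (gradient f (matVec A x))) v : ℝ)
      = inner ℝ (gradient f (matVec A x)) (matVec A v) := by
    rw [inner_matVec, Matrix.transpose_transpose]
  rw [this, inner_gradient]
  rfl

lemma matVec_inv_left (B : Matrix (Fin 2) (Fin 2) ℝ) (hB : IsUnit B.det)
    (x : EuclideanSpace ℝ (Fin 2)) : matVec B⁻¹ (matVec B x) = x := by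
  rw [← matVec_mul, Matrix.nonsing_inv_mul _ hB, matVec_one]

lemma matVec_inv_right (B : Matrix (Fin 2) (Fin 2) ℝ) (hB : IsUnit B.det)
    (x : EuclideanSpace ℝ (Fin 2)) : matVec B (matVec B⁻¹ x) = x := by
  rw [← matVec_mul, Matrix.mul_nonsing_inv _ hB, matVec_one]

lemma integral_image_matVec (B : Matrix (Fin 2) (Fin 2) ℝ) (hB : IsUnit B.det)
    (T : Set (EuclideanSpace ℝ (Fin 2))) (hT : MeasurableSet T)
    (g : EuclideanSpace ℝ (Fin 2) → ℝ) :
    ∫ y in matVec B '' T, g y = ∫ x in T, |B.det| * g (matVec B x) := by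
  have hinj : Set.InjOn (matVec B) T := fun a _ b _ h => by
    have := congrArg (matVec B⁻¹) h
    rwa [matVec_inv_left B hB, matVec_inv_left B hB] at this
  have := MeasureTheory.integral_image_eq_integral_abs_det_fderiv_smul volume hT
    (fun x _ => (clmOf B).hasFDerivAt.hasFDerivWithinAt) hinj g
  have hc : ⇑(clmOf B) = matVec B := rfl
  simpa [hc, clmOf_det, smul_eq_mul, clmOf_apply] using this

noncomputable def homOf (B : Matrix (Fin 2) (Fin 2) ℝ) (hB : IsUnit B.det) :
    EuclideanSpace ℝ (Fin 2) ≃ₜ EuclideanSpace ℝ (Fin 2) where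
  toFun := matVec B
  invFun := matVec B⁻¹
  left_inv := matVec_inv_left B hB
  right_inv := matVec_inv_right B hB
  continuous_toFun := (clmOf B).continuous
  continuous_invFun := (clmOf B⁻¹).continuous

lemma key_integral (B : Matrix (Fin 2) (Fin 2) ℝ) (hB : IsUnit B.det)
    (T : Set (EuclideanSpace ℝ (Fin 2))) (hT : MeasurableSet T)
    (u : EuclideanSpace ℝ (Fin 2) → ℝ) (hu : Differentiable ℝ u)
    (ψ : EuclideanSpace ℝ (Fin 2) → ℝ) (hψ : Differentiable ℝ ψ) :
    ∫ y in matVec B '' T,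
        |(B⁻¹).det| *
          (inner ℝ (matVec (B * Bᵀ) (gradient (fun z => u (matVec B⁻¹ z)) y))
            (gradient ψ y) : ℝ)
      = ∫ x in T, (inner ℝ (gradient u x) (gradient (fun z => ψ (matVec B z)) x) : ℝ) := by
  rw [integral_image_matVec B hB T hT]
  apply MeasureTheory.setIntegral_congr_fun hT
  intro x _
  have hgrad : gradient (fun z => u (matVec B⁻¹ z)) (matVec B x)
      = matVec B⁻¹ᵀ (gradient u x) := by
    rw [gradient_comp_matVec B⁻¹ u hu, matVec_inv_left B hB]
  have hmat : matVec (B * Bᵀ) (matVec B⁻¹ᵀ (gradient u x)) = matVec B (gradient u x) := by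
    rw [← matVec_mul]
    rw [Matrix.mul_assoc, ← Matrix.transpose_mul, Matrix.nonsing_inv_mul _ hB,
      Matrix.transpose_one, Matrix.mul_one]
  have hne : B.det ≠ 0 := hB.ne_zero
  have hdet : |B.det| * |(B⁻¹).det| = 1 := by
    rw [Matrix.det_nonsing_inv, Ring.inverse_eq_inv', abs_inv, mul_inv_cancel₀]
    simpa using hne
  simp only
  rw [hgrad, hmat, inner_matVec, ← gradient_comp_matVec B ψ hψ x, ← mul_assoc, hdet, one_mul]

lemma tsupport_comp_matVec (B : Matrix (Fin 2) (Fin 2) ℝ) (hB : IsUnit B.det)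
    (ψ : EuclideanSpace ℝ (Fin 2) → ℝ) :
    tsupport (fun z => ψ (matVec B z)) = matVec B ⁻¹' tsupport ψ := by
  have : (fun z => ψ (matVec B z)) = ψ ∘ (homOf B hB) := rfl
  rw [this, tsupport, Function.support_comp_eq_preimage,
    ← (homOf B hB).preimage_closure]
  rfl


/-- Weak harmonicity of `u` on `T` is equivalent to the weak form of the transformed problem,
with coefficient matrix `|det B⁻¹| B Bᵀ`, for `û = u ∘ B⁻¹` on `B(T)`. -/
theorem stmt_5 (B : Matrix (Fin 2) (Fin 2) ℝ) (hB : IsUnit B.det)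
    (T : Set (EuclideanSpace ℝ (Fin 2))) (hT : IsOpen T)
    (u : EuclideanSpace ℝ (Fin 2) → ℝ) (hu : Differentiable ℝ u)
    (hu2 : MemLp (fun x => gradient u x) 2 (volume.restrict T)) :
    (∀ φ : EuclideanSpace ℝ (Fin 2) → ℝ, ContDiff ℝ (⊤ : ℕ∞) φ → HasCompactSupport φ →
        tsupport φ ⊆ T →
        ∫ x in T, (inner ℝ (gradient u x) (gradient φ x) : ℝ) = 0) ↔
    (∀ ψ : EuclideanSpace ℝ (Fin 2) → ℝ, ContDiff ℝ (⊤ : ℕ∞) ψ → HasCompactSupport ψ →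
        tsupport ψ ⊆ matVec B '' T →
        ∫ y in matVec B '' T,
          |(B⁻¹).det| *
            (inner ℝ (matVec (B * Bᵀ) (gradient (fun z => u (matVec B⁻¹ z)) y))
              (gradient ψ y) : ℝ) = 0) := by
  have hTm : MeasurableSet T := hT.measurableSet
  constructor
  · intro H ψ hψ hψc hψs
    rw [key_integral B hB T hTm u hu ψ (hψ.differentiable (by simp))]
    apply H
    · exact hψ.comp (clmOf B).contDiff
    · exact hψc.comp_homeomorph (homOf B hB)
    · rw [tsupport_comp_matVec B hB]
      intro x hx
      obtain ⟨t, htT, het⟩ := hψs hx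
      rwa [show t = x from by
        have := congrArg (matVec B⁻¹) het
        rwa [matVec_inv_left B hB, matVec_inv_left B hB] at this] at htT
  · intro H φ hφ hφc hφs
    set ψ : EuclideanSpace ℝ (Fin 2) → ℝ := fun z => φ (matVec B⁻¹ z) with hψdef
    have hcomp : (fun z => ψ (matVec B z)) = φ := by
      funext z; simp only [hψdef, matVec_inv_left B hB]
    have hψ : ContDiff ℝ (⊤ : ℕ∞) ψ := hφ.comp (clmOf B⁻¹).contDiff
    have hBinv : IsUnit (B⁻¹).det := by
      rw [Matrix.det_nonsing_inv]
      exact (isUnit_iff_ne_zero).2 (by simpa [Ring.inverse_eq_inv'] using inv_ne_zero hB.ne_zero)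
    have hψc : HasCompactSupport ψ := hφc.comp_homeomorph (homOf B⁻¹ hBinv)
    have hψs : tsupport ψ ⊆ matVec B '' T := by
      rw [tsupport_comp_matVec B⁻¹ hBinv]
      intro x hx
      exact ⟨matVec B⁻¹ x, hφs hx, matVec_inv_right B hB x⟩
    have := H ψ hψ hψc hψs
    rwa [key_integral B hB T hTm u hu ψ (hψ.differentiable (by simp)), hcomp] at this
end

section
/- Let K ⊂ ℝ² be a bounded open connected set whose boundary ∂K is the union of finitely many closed line segments [v₁,v₂], [v₂,v₃], …, [v_N, v₁] joining the vertices v₁, …, v_N ∈ ℝ². Let v : closure(K) → ℝ be continuous on closure(K), twice differentiable on K with ∂²v/∂x₁² + ∂²v/∂x₂² = 0 on K (i.e. harmonic on K), and such that the restriction of v to each closed boundary segment is an affine function of the arc parameter. If v(v_i) = 0 for all i = 1, …, N, then v ≡ 0 on closure(K). -/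
/-!
If `∑ᵢ f''(eᵢ, eᵢ) ≥ 0`, then `f + ε‖x‖²` has Laplacian at least `2ε dim E > 0`, which is impossible
at an interior maximum, where every second directional derivative `f''(e, e)` is `≤ 0` (second
derivative test on the line through the maximum). So `f + ε‖x‖²` attains its maximum over the
compact set `closure K` on the frontier, and letting `ε → 0` gives the weak maximum principle.
A function affine on an edge and vanishing at both of its vertices vanishes on the edge, so `f`
vanishes on the frontier, and the maximum principle applied to `f` and `-f` gives `f = 0`.
-/

open Filter Set Topology

theorem IsLocalMax.deriv_deriv_nonpos {f : ℝ → ℝ} {x₀ : ℝ} (h : IsLocalMax f x₀)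
    (hc : ContinuousAt f x₀) : deriv (deriv f) x₀ ≤ 0 := by
  by_contra! hpos
  have hmin := isLocalMin_of_deriv_deriv_pos hpos h.deriv_eq_zero hc
  -- a local max that is also a local min is locally constant, so `deriv f` vanishes near `x₀`
  have hconst : f =ᶠ[𝓝 x₀] fun _ => f x₀ :=
    (hmin.and h).mono fun _ hx => le_antisymm hx.2 hx.1
  have hderiv : deriv f =ᶠ[𝓝 x₀] fun _ => 0 :=
    hconst.eventuallyEq_nhds.mono fun _ hx => by rw [hx.deriv_eq, deriv_const]
  rw [hderiv.deriv_eq, deriv_const] at hpos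
  exact hpos.false

theorem IsLocalMax.secondDeriv_apply_self_nonpos {E : Type*} [NormedAddCommGroup E]
    [NormedSpace ℝ E] {g : E → ℝ} {g' : E → E →L[ℝ] ℝ} {g'' : E →L[ℝ] E →L[ℝ] ℝ} {x₀ : E}
    (h : IsLocalMax g x₀) (hg' : ∀ᶠ x in 𝓝 x₀, HasFDerivAt g (g' x) x)
    (hg'' : HasFDerivAt g' g'' x₀) (e : E) : g'' e e ≤ 0 := by
  set c : ℝ → E := fun t => x₀ + t • e
  have hc : ∀ t, HasDerivAt c e t := fun t => by
    simpa [c] using ((hasDerivAt_id t).smul_const e).const_add x₀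
  have hc0 : c 0 = x₀ := by simp [c]
  have hφ' : deriv (g ∘ c) =ᶠ[𝓝 0] fun t => g' (c t) e := by
    have : ∀ᶠ t in 𝓝 0, HasFDerivAt g (g' (c t)) (c t) :=
      (hc 0).continuousAt.tendsto.eventually (hc0 ▸ hg')
    exact this.mono fun t ht => (ht.comp_hasDerivAt t (hc t)).deriv
  have hφ'' : HasDerivAt (fun t => g' (c t) e) (g'' e e) 0 :=
    ((hc0 ▸ hg'').comp_hasDerivAt 0 (hc 0)).clm_apply (hasDerivAt_const 0 e) |>.congr_deriv
      (by simp)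
  have hmax : IsLocalMax (g ∘ c) 0 := (hc0 ▸ h).comp_continuous (hc 0).continuousAt
  have hcont : ContinuousAt (g ∘ c) 0 :=
    (hc0 ▸ hg'.self_of_nhds).continuousAt.comp (hc 0).continuousAt
  simpa [hφ'.deriv_eq, hφ''.deriv] using hmax.deriv_deriv_nonpos hcont

section MaximumPrinciple

variable {E ι : Type*} [NormedAddCommGroup E] [InnerProductSpace ℝ E] [Fintype ι]

theorem not_isLocalMax_of_laplacian_pos {g : E → ℝ} {g' : E → E →L[ℝ] ℝ}
    {g'' : E →L[ℝ] E →L[ℝ] ℝ} {x₀ : E} (b : OrthonormalBasis ι ℝ E)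
    (hg' : ∀ᶠ x in 𝓝 x₀, HasFDerivAt g (g' x) x) (hg'' : HasFDerivAt g' g'' x₀)
    (hpos : 0 < ∑ i, g'' (b i) (b i)) : ¬IsLocalMax g x₀ := fun h =>
  hpos.not_ge <| Finset.sum_nonpos fun i _ => h.secondDeriv_apply_self_nonpos hg' hg'' (b i)

variable [ProperSpace E] [Nonempty ι] {K : Set E} {f : E → ℝ} {f' : E → E →L[ℝ] ℝ}
  {f'' : E → E →L[ℝ] E →L[ℝ] ℝ}

theorem exists_mem_frontier_isMaxOn_add_mul_norm_sq (b : OrthonormalBasis ι ℝ E) (hKopen : IsOpen K)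
    (hKbd : Bornology.IsBounded K) (hK : (closure K).Nonempty) (hcont : ContinuousOn f (closure K))
    (hf' : ∀ x ∈ K, HasFDerivAt f (f' x) x) (hf'' : ∀ x ∈ K, HasFDerivAt f' (f'' x) x)
    (hsub : ∀ x ∈ K, 0 ≤ ∑ i, f'' x (b i) (b i)) {ε : ℝ} (hε : 0 < ε) :
    ∃ x₀ ∈ frontier K, IsMaxOn (fun x => f x + ε * ‖x‖ ^ 2) (closure K) x₀ := by
  set g : E → ℝ := fun x => f x + ε * ‖x‖ ^ 2
  obtain ⟨x₀, hx₀, hmax⟩ := hKbd.isCompact_closure.exists_isMaxOn (f := g) hK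
    (hcont.add (continuous_const.mul (continuous_norm.pow 2)).continuousOn)
  refine ⟨x₀, ?_, hmax⟩
  rw [hKopen.frontier_eq]
  refine ⟨hx₀, fun hx₀K => ?_⟩
  have hg' : ∀ x ∈ K, HasFDerivAt g (f' x + ε • 2 • innerSL ℝ x) x := fun x hx =>
    (hf' x hx).add ((hasStrictFDerivAt_norm_sq x).hasFDerivAt.const_mul ε)
  have hg'' : HasFDerivAt (fun x => f' x + ε • 2 • innerSL ℝ x)
      (f'' x₀ + ε • 2 • innerSL ℝ) x₀ :=
    (hf'' x₀ hx₀K).add ((ε • 2 • innerSL ℝ (E := E)).hasFDerivAt)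
  refine not_isLocalMax_of_laplacian_pos b
    (eventually_of_mem (hKopen.mem_nhds hx₀K) hg') hg'' ?_
    (hmax.isLocalMax (mem_of_superset (hKopen.mem_nhds hx₀K) subset_closure))
  have hinner (i : ι) : (ε • 2 • innerSL ℝ (E := E)) (b i) (b i) = 2 * ε := by
    simp [b.orthonormal.1 i]
    ring
  simp only [add_apply, Finset.sum_add_distrib, hinner, Finset.sum_const,
    Finset.card_univ, nsmul_eq_mul]
  exact add_pos_of_nonneg_of_pos (hsub x₀ hx₀K) (by positivity)

theorem nonpos_on_closure_of_subharmonic (b : OrthonormalBasis ι ℝ E) (hKopen : IsOpen K)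
    (hKbd : Bornology.IsBounded K) (hcont : ContinuousOn f (closure K))
    (hf' : ∀ x ∈ K, HasFDerivAt f (f' x) x) (hf'' : ∀ x ∈ K, HasFDerivAt f' (f'' x) x)
    (hsub : ∀ x ∈ K, 0 ≤ ∑ i, f'' x (b i) (b i)) (hfr : ∀ x ∈ frontier K, f x ≤ 0) :
    ∀ x ∈ closure K, f x ≤ 0 := by
  intro x hx
  obtain ⟨R, hR⟩ := hKbd.closure.subset_closedBall 0
  have hbound : ∀ y ∈ closure K, ‖y‖ ≤ R := fun y hy => by simpa using hR hy
  refine le_of_forall_pos_le_add fun δ hδ => ?_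
  rw [zero_add]
  set ε := δ / (R ^ 2 + 1)
  have hε : 0 < ε := by positivity
  obtain ⟨x₀, hx₀, hmax⟩ :=
    exists_mem_frontier_isMaxOn_add_mul_norm_sq b hKopen hKbd ⟨x, hx⟩ hcont hf' hf'' hsub hε
  have hx₀K : x₀ ∈ closure K := frontier_subset_closure hx₀
  calc f x ≤ f x + ε * ‖x‖ ^ 2 := le_add_of_nonneg_right (by positivity)
    _ ≤ f x₀ + ε * ‖x₀‖ ^ 2 := hmax hx
    _ ≤ ε * R ^ 2 := add_le_of_nonpos_of_le (hfr x₀ hx₀) (by gcongr; exact hbound x₀ hx₀K)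
    _ ≤ δ := by
      rw [div_mul_eq_mul_div, div_le_iff₀ (by positivity)]
      nlinarith

end MaximumPrinciple

theorem eq_zero_of_mem_segment_of_affine {E : Type*} [AddCommGroup E] [Module ℝ E]
    {f : E → ℝ} {p q : E}
    (haff : ∃ a b : ℝ, ∀ t ∈ Icc (0 : ℝ) 1, f ((1 - t) • p + t • q) = a * t + b)
    (hp : f p = 0) (hq : f q = 0) : ∀ x ∈ segment ℝ p q, f x = 0 := by
  obtain ⟨a, b, hab⟩ := haff
  have h0 := hab 0 (left_mem_Icc.mpr zero_le_one)
  have h1 := hab 1 (right_mem_Icc.mpr zero_le_one)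
  simp only [sub_zero, sub_self, one_smul, zero_smul, add_zero, zero_add, mul_zero,
    mul_one, hp, hq] at h0 h1
  rw [segment_eq_image]
  rintro _ ⟨t, ht, rfl⟩
  have ha : a = 0 := by linarith
  rw [hab t ht, ha, ← h0]
  ring

theorem stmt_12_general (N : ℕ) (K : Set (EuclideanSpace ℝ (Fin 2)))
    (hKopen : IsOpen K) (hKbd : Bornology.IsBounded K)
    (v : Fin (N + 1) → EuclideanSpace ℝ (Fin 2))
    (hbdry : frontier K = ⋃ i : Fin (N + 1), segment ℝ (v i) (v (i + 1)))
    (f : EuclideanSpace ℝ (Fin 2) → ℝ)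
    (hcont : ContinuousOn f (closure K))
    (f' : EuclideanSpace ℝ (Fin 2) → EuclideanSpace ℝ (Fin 2) →L[ℝ] ℝ)
    (f'' : EuclideanSpace ℝ (Fin 2) →
      EuclideanSpace ℝ (Fin 2) →L[ℝ] EuclideanSpace ℝ (Fin 2) →L[ℝ] ℝ)
    (hf' : ∀ x ∈ K, HasFDerivAt f (f' x) x)
    (hf'' : ∀ x ∈ K, HasFDerivAt f' (f'' x) x)
    (hharm : ∀ x ∈ K,
      f'' x (EuclideanSpace.single 0 1) (EuclideanSpace.single 0 1)
        + f'' x (EuclideanSpace.single 1 1) (EuclideanSpace.single 1 1) = 0)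
    (haff : ∀ i : Fin (N + 1), ∃ a b : ℝ, ∀ t ∈ Set.Icc (0 : ℝ) 1,
      f ((1 - t) • v i + t • v (i + 1)) = a * t + b)
    (hvanish : ∀ i, f (v i) = 0) :
    ∀ x ∈ closure K, f x = 0 := by
  have hfr : ∀ x ∈ frontier K, f x = 0 := by
    simp only [hbdry, mem_iUnion]
    rintro x ⟨i, hx⟩
    exact eq_zero_of_mem_segment_of_affine (haff i) (hvanish i) (hvanish (i + 1)) x hx
  set b := EuclideanSpace.basisFun (Fin 2) ℝ
  have hlap : ∀ x ∈ K, ∑ i, f'' x (b i) (b i) = 0 := by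
    simpa [b, Fin.sum_univ_two] using hharm
  have hle := nonpos_on_closure_of_subharmonic b hKopen hKbd hcont hf' hf''
    (fun x hx => (hlap x hx).ge) fun x hx => (hfr x hx).le
  have hge := nonpos_on_closure_of_subharmonic b hKopen hKbd hcont.neg (f' := -f') (f'' := -f'')
    (fun x hx => (hf' x hx).neg) (fun x hx => (hf'' x hx).neg)
    (fun x hx => by simp [Finset.sum_neg_distrib, hlap x hx]) fun x hx => by simp [hfr x hx]
  exact fun x hx => le_antisymm (hle x hx) (neg_nonpos.mp (hge x hx))

/-- A function that is harmonic in a bounded open connected polygon `K`, continuous on its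
closure, affine on each (closed) boundary edge, and vanishing at all the vertices, vanishes
identically on the closure of `K` (unisolvence of the vertex degrees of freedom for the lowest
order virtual element space). -/
theorem stmt_12 (N : ℕ) (K : Set (EuclideanSpace ℝ (Fin 2)))
    (hKopen : IsOpen K) (hKbd : Bornology.IsBounded K) (hKconn : IsConnected K)
    (v : Fin (N + 1) → EuclideanSpace ℝ (Fin 2))
    (hbdry : frontier K = ⋃ i : Fin (N + 1), segment ℝ (v i) (v (i + 1)))
    (f : EuclideanSpace ℝ (Fin 2) → ℝ)
    (hcont : ContinuousOn f (closure K))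
    (f' : EuclideanSpace ℝ (Fin 2) → EuclideanSpace ℝ (Fin 2) →L[ℝ] ℝ)
    (f'' : EuclideanSpace ℝ (Fin 2) →
      EuclideanSpace ℝ (Fin 2) →L[ℝ] EuclideanSpace ℝ (Fin 2) →L[ℝ] ℝ)
    (hf' : ∀ x ∈ K, HasFDerivAt f (f' x) x)
    (hf'' : ∀ x ∈ K, HasFDerivAt f' (f'' x) x)
    (hharm : ∀ x ∈ K,
      f'' x (EuclideanSpace.single 0 1) (EuclideanSpace.single 0 1)
        + f'' x (EuclideanSpace.single 1 1) (EuclideanSpace.single 1 1) = 0)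
    (haff : ∀ i : Fin (N + 1), ∃ a b : ℝ, ∀ t ∈ Set.Icc (0 : ℝ) 1,
      f ((1 - t) • v i + t • v (i + 1)) = a * t + b)
    (hvanish : ∀ i, f (v i) = 0) :
    ∀ x ∈ closure K, f x = 0 :=
  stmt_12_general N K hKopen hKbd v hbdry f hcont f' f'' hf' hf'' hharm haff hvanish
end

section
/- Let H be a real inner product space and P : H → H a linear map with P ∘ P = P and ⟨P x, y⟩ = ⟨x, P y⟩ for all x, y ∈ H (an orthogonal projection). Let 0 < c⋆ ≤ c* and let S : H × H → ℝ be a symmetric bilinear form satisfying c⋆ ‖w‖² ≤ S(w,w) ≤ c* ‖w‖² for every w in the range of I − P. Define a_h(u,v) = ⟨P u, P v⟩ + S((I−P)u, (I−P)v). Then for every v ∈ H, min(1, c⋆) ‖v‖² ≤ a_h(v,v) ≤ max(1, c*) ‖v‖². -/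
/-! Since `P` is an orthogonal projection, `v = P v + (v - P v)` is an orthogonal splitting, so
`‖v‖² = ‖P v‖² + ‖v - P v‖²`. The stabilized form replaces the second summand by
`S (v - P v) (v - P v)`, which lies between `c⋆ ‖v - P v‖²` and `c* ‖v - P v‖²`, while the first
summand is kept exactly; comparing termwise gives the constants `min 1 c⋆` and `max 1 c*`. -/

namespace LinearMap.IsSymmetricProjection

variable {𝕜 E : Type*} [RCLike 𝕜] [NormedAddCommGroup E] [InnerProductSpace 𝕜 E]
  {P : E →ₗ[𝕜] E}

theorem inner_map_self_sub_map_eq_zero (hP : P.IsSymmetricProjection) (v : E) :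
    (inner 𝕜 (P v) (v - P v) : 𝕜) = 0 := by
  have hPP : (inner 𝕜 (P v) (P v) : 𝕜) = inner 𝕜 (P v) v := by
    rw [← hP.isSymmetric, ← Module.End.mul_apply, hP.isIdempotentElem.eq]
  rw [inner_sub_right, hPP, sub_self]

theorem norm_sq_eq_norm_map_sq_add_norm_sub_map_sq (hP : P.IsSymmetricProjection) (v : E) :
    ‖v‖ ^ 2 = ‖P v‖ ^ 2 + ‖v - P v‖ ^ 2 := by
  simpa only [add_sub_cancel, ← sq] using
    norm_add_sq_eq_norm_sq_add_norm_sq_of_inner_eq_zero _ _ (hP.inner_map_self_sub_map_eq_zero v)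

end LinearMap.IsSymmetricProjection

section Scalar

variable {α : Type*} [Field α] [LinearOrder α] [IsStrictOrderedRing α] {a b s c : α}

theorem min_one_mul_add_le_add (ha : 0 ≤ a) (hb : 0 ≤ b) (hs : c * b ≤ s) :
    min 1 c * (a + b) ≤ a + s := by
  nlinarith [mul_le_mul_of_nonneg_right (min_le_left 1 c) ha,
    mul_le_mul_of_nonneg_right (min_le_right 1 c) hb]

theorem add_le_max_one_mul_add (ha : 0 ≤ a) (hb : 0 ≤ b) (hs : s ≤ c * b) :
    a + s ≤ max 1 c * (a + b) := by
  nlinarith [mul_le_mul_of_nonneg_right (le_max_left 1 c) ha,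
    mul_le_mul_of_nonneg_right (le_max_right 1 c) hb]

end Scalar

theorem stmt_14_general {H : Type*} [NormedAddCommGroup H] [InnerProductSpace ℝ H]
    (P : H →ₗ[ℝ] H)
    (hidem : ∀ x, P (P x) = P x)
    (hsym : ∀ x y, (inner ℝ (P x) y : ℝ) = inner ℝ x (P y))
    (S : H →ₗ[ℝ] H →ₗ[ℝ] ℝ)
    (cs cb : ℝ)
    (hspec : ∀ w ∈ LinearMap.range (LinearMap.id - P),
      cs * ‖w‖ ^ 2 ≤ S w w ∧ S w w ≤ cb * ‖w‖ ^ 2) :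
    ∀ v : H,
      min 1 cs * ‖v‖ ^ 2 ≤ (inner ℝ (P v) (P v) : ℝ) + S (v - P v) (v - P v) ∧
      (inner ℝ (P v) (P v) : ℝ) + S (v - P v) (v - P v) ≤ max 1 cb * ‖v‖ ^ 2 := by
  intro v
  have hP : P.IsSymmetricProjection := ⟨LinearMap.ext hidem, hsym⟩
  obtain ⟨hlower, hupper⟩ := hspec (v - P v) ⟨v, rfl⟩
  rw [real_inner_self_eq_norm_sq, hP.norm_sq_eq_norm_map_sq_add_norm_sub_map_sq v]
  exact ⟨min_one_mul_add_le_add (sq_nonneg _) (sq_nonneg _) hlower,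
    add_le_max_one_mul_add (sq_nonneg _) (sq_nonneg _) hupper⟩

/-- Spectral equivalence of the stabilized virtual element form: if `P` is an orthogonal
projection on a real inner product space `H` and `S` is a symmetric bilinear form spectrally
equivalent (with constants `0 < c⋆ ≤ c*`) to the squared norm on the range of `I − P`, then
`a_h(v,v) = ⟪Pv, Pv⟫ + S((I−P)v, (I−P)v)` satisfies
`min(1,c⋆) ‖v‖² ≤ a_h(v,v) ≤ max(1,c*) ‖v‖²` for all `v`. -/
theorem stmt_14 {H : Type*} [NormedAddCommGroup H] [InnerProductSpace ℝ H]
    (P : H →ₗ[ℝ] H)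
    (hidem : ∀ x, P (P x) = P x)
    (hsym : ∀ x y, (inner ℝ (P x) y : ℝ) = inner ℝ x (P y))
    (S : H →ₗ[ℝ] H →ₗ[ℝ] ℝ) (hSsym : ∀ x y, S x y = S y x)
    (cs cb : ℝ) (hcs : 0 < cs) (hcscb : cs ≤ cb)
    (hspec : ∀ w ∈ LinearMap.range (LinearMap.id - P),
      cs * ‖w‖ ^ 2 ≤ S w w ∧ S w w ≤ cb * ‖w‖ ^ 2) :
    ∀ v : H,
      min 1 cs * ‖v‖ ^ 2 ≤ (inner ℝ (P v) (P v) : ℝ) + S (v - P v) (v - P v) ∧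
      (inner ℝ (P v) (P v) : ℝ) + S (v - P v) (v - P v) ≤ max 1 cb * ‖v‖ ^ 2 :=
  stmt_14_general P hidem hsym S cs cb hspec
end
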